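/- Let X ⊆ ℤ² be a full-dimensional lattice-convex set with finitely many observers, all lying in convex position on the boundary of the polygon obtained by moving out the edges of conv(X) by lattice distance one. Then rc(X) ≤ H(X) + 1, where H(X) is the maximum cardinality of a hiding set for X; combined with the general hiding set bound, H(X) ≤ rc(X) ≤ H(X) + 1. -/

import Mathlib

/-- Coercion of an integer point to a real point. -/
def toR {d : ℕ} (z : Fin d → ℤ) : Fin d → ℝ := fun i => (z i : ℝ)

/-- `S` is a hiding set for the lattice-convex set `X`. -/
def HidingSet {d : ℕ} (X S : Set (Fin d → ℤ)) : Prop :=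
  (∀ z ∈ S, z ∉ X ∧ toR z ∈ (affineSpan ℝ (toR '' X) : Set (Fin d → ℝ))) ∧
  ∀ x ∈ S, ∀ y ∈ S, x ≠ y →
    (convexHull ℝ {toR x, toR y} ∩ convexHull ℝ (toR '' X)).Nonempty

/-- `Ax ≤ b` is a relaxation of `X`: its integer solutions are exactly `X`. -/
def Relax {d m : ℕ} (X : Set (Fin d → ℤ)) (A : Fin m → Fin d → ℝ)
    (b : Fin m → ℝ) : Prop :=
  ∀ z : Fin d → ℤ, (∀ i, ∑ j, A i j * (z j : ℝ) ≤ b i) ↔ z ∈ X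

/-!
Every lattice point `z ∉ X` has an observer in `conv (X ∪ {z})`, so inequalities valid on `X`
form a relaxation as soon as every observer violates one of them. In the plane, the directions
`θ` for which `⟪dirVec θ, ·⟫ ≤ max_X ⟪dirVec θ, ·⟫` cuts off a given point form an open arc
containing no two antipodal directions. Cutting the circle of directions at `θ₀`, the observers not cut off by `θ₀`
give open intervals of `(θ₀, θ₀ + 2π)`; greedily, some `k` points pierce all of them while `k`
of them are pairwise disjoint. The `k` pierced directions and `θ₀` give a relaxation with
`k + 1` inequalities, and the `k` observers with disjoint arcs form a hiding set, since two
points whose segment misses `conv X` are cut off by a common direction. Conversely, distinct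
points of a hiding set violate distinct inequalities of any relaxation.
-/

open Set

lemma relax_iff {d m : ℕ} {X : Set (Fin d → ℤ)} {A : Fin m → Fin d → ℝ} {b : Fin m → ℝ} :
    Relax X A b ↔ ∀ z, (∀ i, A i ⬝ᵥ toR z ≤ b i) ↔ z ∈ X := Iff.rfl

lemma isLinearMap_dotProduct {d : ℕ} (a : Fin d → ℝ) : IsLinearMap ℝ (a ⬝ᵥ ·) :=
  ⟨dotProduct_add a, fun c x => dotProduct_smul c a x⟩

lemma Relax.convexHull_subset {d m : ℕ} {X : Set (Fin d → ℤ)} {A : Fin m → Fin d → ℝ}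
    {b : Fin m → ℝ} (hrel : Relax X A b) (i : Fin m) :
    convexHull ℝ (toR '' X) ⊆ {v | A i ⬝ᵥ v ≤ b i} := by
  refine convexHull_min ?_ (convex_halfSpace_le (isLinearMap_dotProduct _) _)
  rintro _ ⟨x, hx, rfl⟩
  exact (hrel x).mpr hx i

lemma HidingSet.card_le_of_relax {d m : ℕ} {X : Set (Fin d → ℤ)} {S : Finset (Fin d → ℤ)}
    (hS : HidingSet X S) {A : Fin m → Fin d → ℝ} {b : Fin m → ℝ} (hrel : Relax X A b) :
    S.card ≤ m := by
  have hviol : ∀ z : S, ∃ i, b i < A i ⬝ᵥ toR z := fun z => by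
    simpa [← relax_iff.mp hrel] using (hS.1 z z.2).1
  choose g hg using hviol
  suffices Function.Injective g by simpa using Fintype.card_le_of_injective g this
  intro x y hxy
  by_contra hne
  obtain ⟨v, hv, hvX⟩ := hS.2 x x.2 y y.2 (Subtype.coe_ne_coe.mpr hne)
  have hcut : convexHull ℝ {toR x, toR y} ⊆ {v | b (g x) < A (g x) ⬝ᵥ v} := by
    refine convexHull_min ?_ (convex_halfSpace_gt (isLinearMap_dotProduct _) _)
    rintro _ (rfl | rfl)
    exacts [hg x, hxy ▸ hg y]
  have hle : A (g x) ⬝ᵥ v ≤ b (g x) := hrel.convexHull_subset (g x) hvX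
  exact hle.not_gt (hcut hv)

lemma toR_injective {d : ℕ} : Function.Injective (toR (d := d)) := fun _ _ h =>
  funext fun i => Int.cast_injective (congrFun h i)

lemma isometry_toR {d : ℕ} : Isometry (toR (d := d)) :=
  Isometry.piMap (fun _ => Int.cast) fun _ => Isometry.of_dist_eq Int.dist_cast_real

lemma finite_setOf_toR_mem {d : ℕ} {B : Set (Fin d → ℝ)} (hB : Bornology.IsBounded B) :
    {z | toR z ∈ B}.Finite :=
  (Metric.isCompact_of_isClosed_isBounded (isClosed_discrete _)
    (isometry_toR.antilipschitz.isBounded_preimage hB)).finite_of_discrete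

lemma eq_of_mem_convexHull_insert_of_mem_convexHull_insert {E : Type*} [AddCommGroup E]
    [Module ℝ E] {s : Set E} (hs : s.Nonempty) {p q : E} (hp : p ∉ convexHull ℝ s)
    (hq : q ∈ convexHull ℝ (insert p s)) (hpq : p ∈ convexHull ℝ (insert q s)) : p = q := by
  rw [convexHull_insert hs, mem_convexJoin] at hq hpq
  obtain ⟨_, hp', x, hx, a, a', ha, ha', haa, hqx⟩ := hq
  obtain ⟨_, hq', y, hy, b, b', hb, hb', hbb, hpy⟩ := hpq
  rw [mem_singleton_iff.mp hp'] at hqx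
  rw [mem_singleton_iff.mp hq'] at hpy
  -- `q` lies on `[p, x]` and `p` on `[q, y]`; unless both are trivial, `p ∈ [x, y]`
  rcases (show b * a ≤ 1 by nlinarith).eq_or_lt with hab | hab
  · have hb1 : b = 1 := by nlinarith
    rw [← hpy, hb1, show b' = 0 by linarith, one_smul, zero_smul, add_zero]
  refine absurd ?_ hp
  have hc : 0 < 1 - b * a := sub_pos.mpr hab
  have hcomb : (b * a' / (1 - b * a)) • x + (b' / (1 - b * a)) • y = p := by
    apply smul_right_injective E hc.ne'
    simp only [smul_add, smul_smul, mul_div_cancel₀ _ hc.ne']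
    linear_combination (norm := module) b • hqx + hpy
  rw [← hcomb]
  refine (convex_convexHull ℝ s) hx hy (by positivity) (by positivity) ?_
  field_simp
  linear_combination b * haa + hbb

lemma convexHull_insert_subset_of_mem {E : Type*} [AddCommGroup E] [Module ℝ E] {s : Set E}
    {p q : E} (hq : q ∈ convexHull ℝ (insert p s)) :
    convexHull ℝ (insert q s) ⊆ convexHull ℝ (insert p s) :=
  convexHull_min (insert_subset hq ((subset_insert p s).trans (subset_convexHull ℝ _)))
    (convex_convexHull ℝ _)

def IsObserver {d : ℕ} (X : Set (Fin d → ℤ)) (o : Fin d → ℤ) : Prop :=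
  o ∉ X ∧ ∀ w, toR w ∈ convexHull ℝ (toR '' insert o X) → w ∈ insert o X

section Observers

variable {d : ℕ} {X : Set (Fin d → ℤ)}

lemma exists_isObserver_mem_convexHull (hfin : X.Finite) (hne : X.Nonempty)
    (hX : ∀ z, toR z ∈ convexHull ℝ (toR '' X) ↔ z ∈ X) {z : Fin d → ℤ} (hz : z ∉ X) :
    ∃ o, IsObserver X o ∧ toR o ∈ convexHull ℝ (toR '' insert z X) := by
  simp only [IsObserver, image_insert_eq]
  set hull : (Fin d → ℤ) → Set (Fin d → ℝ) := fun w => convexHull ℝ (insert (toR w) (toR '' X))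
  have hT : {w | w ∉ X ∧ toR w ∈ hull z}.Finite := by
    refine (finite_setOf_toR_mem ?_).subset fun w hw => hw.2
    exact (((hfin.image toR).insert (toR z)).isCompact_convexHull ℝ).isBounded
  -- a point with minimal hull is an observer
  obtain ⟨o, ⟨hoX, hoz⟩, hmin⟩ := hT.exists_minimalFor hull _
    ⟨z, hz, subset_convexHull ℝ _ (mem_insert _ _)⟩
  refine ⟨o, ⟨hoX, fun w hw => ?_⟩, hoz⟩
  by_contra hwo
  obtain ⟨hwo, hwX⟩ := not_or.mp hwo
  have hwo' : hull w ⊆ hull o := convexHull_insert_subset_of_mem hw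
  have how : toR o ∈ hull w :=
    hmin ⟨hwX, convexHull_insert_subset_of_mem hoz (hwo' (subset_convexHull ℝ _ (mem_insert _ _)))⟩
      hwo' (subset_convexHull ℝ _ (mem_insert _ _))
  exact hwo (toR_injective (eq_of_mem_convexHull_insert_of_mem_convexHull_insert
    (hne.image toR) (fun h => hwX ((hX w).mp h)) how hw))

lemma exists_relax_of_forall_isObserver {m : ℕ} (hfin : X.Finite) (hne : X.Nonempty)
    (hX : ∀ z, toR z ∈ convexHull ℝ (toR '' X) ↔ z ∈ X) (a : Fin m → Fin d → ℝ)
    (hcut : ∀ o, IsObserver X o → ∃ i, ∀ x ∈ X, a i ⬝ᵥ toR x < a i ⬝ᵥ toR o) :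
    ∃ b, Relax X a b := by
  choose x hxX hxmax using fun i => exists_max_image X (fun y => a i ⬝ᵥ toR y) hfin hne
  refine ⟨fun i => a i ⬝ᵥ toR (x i),
    relax_iff.mpr fun z => ⟨fun hz => ?_, fun hz i => hxmax i z hz⟩⟩
  by_contra hzX
  obtain ⟨o, ho, hoz⟩ := exists_isObserver_mem_convexHull hfin hne hX hzX
  obtain ⟨i, hi⟩ := hcut o ho
  have hhull : convexHull ℝ (toR '' insert z X) ⊆ {v | a i ⬝ᵥ v ≤ a i ⬝ᵥ toR (x i)} := by
    refine convexHull_min ?_ (convex_halfSpace_le (isLinearMap_dotProduct _) _)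
    rintro _ ⟨w, hw | hw, rfl⟩
    exacts [hw ▸ hz i, hxmax i w hw]
  exact (hhull hoz).not_gt (hi _ (hxX i))

end Observers

lemma exists_max_min_of_le_of_le_succ {P Q : ℕ → Prop} (hPQ : ∀ n, P n → ∀ m, Q m → n ≤ m)
    (h : ∃ n m, P n ∧ Q m ∧ m ≤ n + 1) :
    ∃ h r, P h ∧ (∀ n, P n → n ≤ h) ∧ Q r ∧ (∀ m, Q m → r ≤ m) ∧ h ≤ r ∧ r ≤ h + 1 := by
  classical
  obtain ⟨n, m, hn, hm, hnm⟩ := h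
  have hQ : ∃ m, Q m := ⟨m, hm⟩
  have hmax : P (Nat.findGreatest P m) := Nat.findGreatest_spec (hPQ n hn m hm) hn
  have hle : n ≤ Nat.findGreatest P m := Nat.le_findGreatest (hPQ n hn m hm) hn
  refine ⟨Nat.findGreatest P m, Nat.find hQ, hmax,
    fun k hk => Nat.le_findGreatest (hPQ k hk m hm) hk, Nat.find_spec hQ,
    fun k hk => Nat.find_min' hQ hk, hPQ _ hmax _ (Nat.find_spec hQ), ?_⟩
  have := Nat.find_min' hQ hm
  omega

lemma exists_piercing_card_le_pairwiseDisjoint {ι α : Type*} [DecidableEq ι] [LinearOrder α]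
    [DenselyOrdered α] (a b : ι → α) (t : Finset ι) (hab : ∀ i ∈ t, a i < b i) :
    ∃ (P : Finset α) (D : Finset ι), D ⊆ t ∧ (∀ i ∈ t, ∃ p ∈ P, p ∈ Ioo (a i) (b i)) ∧
      (D : Set ι).PairwiseDisjoint (fun i => Ioo (a i) (b i)) ∧ P.card ≤ D.card := by
  induction t using Finset.strongInduction with
  | H t ih =>
  rcases t.eq_empty_or_nonempty with rfl | ht
  · exact ⟨∅, ∅, subset_rfl, by simp, by simp, le_rfl⟩
  obtain ⟨i₀, hi₀, hmin⟩ := t.exists_min_image b ht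
  set G := t.filter (a · < b i₀)
  have hi₀G : i₀ ∈ G := Finset.mem_filter.mpr ⟨hi₀, hab i₀ hi₀⟩
  obtain ⟨p, hGp, hpb⟩ := exists_between ((Finset.sup'_lt_iff ⟨i₀, hi₀G⟩).mpr
    fun j hj => (Finset.mem_filter.mp hj).2)
  obtain ⟨P, D, hDt, hPt, hD, hPD⟩ := ih (t \ G)
    (Finset.sdiff_ssubset (Finset.filter_subset _ _) ⟨i₀, hi₀G⟩)
    fun i hi => hab i (Finset.mem_sdiff.mp hi).1
  have hi₀D : i₀ ∉ D := fun h => (Finset.mem_sdiff.mp (hDt h)).2 hi₀G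
  refine ⟨insert p P, insert i₀ D, Finset.insert_subset hi₀ (hDt.trans Finset.sdiff_subset),
    fun i hi => ?_, ?_, ?_⟩
  · by_cases hiG : i ∈ G
    · exact ⟨p, Finset.mem_insert_self _ _, (Finset.le_sup' a hiG).trans_lt hGp,
        hpb.trans_le (hmin i (Finset.mem_filter.mp hiG).1)⟩
    · obtain ⟨q, hq, hqi⟩ := hPt i (Finset.mem_sdiff.mpr ⟨hi, hiG⟩)
      exact ⟨q, Finset.mem_insert_of_mem hq, hqi⟩
  · rw [Finset.coe_insert]
    refine hD.insert fun j hj _ => Set.disjoint_left.mpr fun x hx hx' => ?_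
    have hj' := Finset.mem_sdiff.mp (hDt hj)
    have : b i₀ ≤ a j := not_lt.mp fun h => hj'.2 (Finset.mem_filter.mpr ⟨hj'.1, h⟩)
    exact (hx.2.trans_le this).not_gt hx'.1
  · rw [Finset.card_insert_of_notMem hi₀D]
    exact (Finset.card_insert_le _ _).trans (Nat.succ_le_succ hPD)

lemma IsOpen.eq_Ioo_csInf_csSup {α : Type*} [ConditionallyCompleteLinearOrder α]
    [TopologicalSpace α] [OrderTopology α] [DenselyOrdered α] [NoMinOrder α] [NoMaxOrder α]
    {s : Set α} (ho : IsOpen s) (hc : IsConnected s) (hb : BddBelow s) (ha : BddAbove s) :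
    s = Ioo (sInf s) (sSup s) := by
  refine Subset.antisymm (fun x hx => ⟨?_, ?_⟩) (hc.Ioo_csInf_csSup_subset hb ha)
  · obtain ⟨l, hl, hls⟩ := exists_Ioc_subset_of_mem_nhds (ho.mem_nhds hx) (exists_lt x)
    obtain ⟨y, hly, hyx⟩ := exists_between hl
    exact (csInf_le hb (hls ⟨hly, hyx.le⟩)).trans_lt hyx
  · obtain ⟨u, hu, hus⟩ := exists_Ico_subset_of_mem_nhds (ho.mem_nhds hx) (exists_gt x)
    obtain ⟨y, hxy, hyu⟩ := exists_between hu
    exact hxy.trans_le (le_csSup ha (hus ⟨hxy.le, hyu⟩))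

lemma exists_dotProduct_lt_of_disjoint {d : ℕ} {K T : Set (Fin d → ℝ)} (hK : K.Finite)
    (hT : T.Finite) (h : Disjoint (convexHull ℝ K) (convexHull ℝ T)) :
    ∃ a : Fin d → ℝ, ∀ x ∈ K, ∀ y ∈ T, a ⬝ᵥ x < a ⬝ᵥ y := by
  obtain ⟨f, u, v, hfu, huv, hvf⟩ := geometric_hahn_banach_compact_closed
    (convex_convexHull ℝ K) (hK.isCompact_convexHull ℝ) (convex_convexHull ℝ T)
    (hT.isCompact_convexHull ℝ).isClosed h
  set a : Fin d → ℝ := fun i => f fun j => if i = j then 1 else 0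
  have hf : ∀ x, f x = a ⬝ᵥ x := fun x => by
    simpa [dotProduct, mul_comm] using LinearMap.pi_apply_eq_sum_univ (f : (Fin d → ℝ) →ₗ[ℝ] ℝ) x
  refine ⟨a, fun x hx y hy => ?_⟩
  rw [← hf, ← hf]
  exact ((hfu x (subset_convexHull ℝ K hx)).trans huv).trans (hvf y (subset_convexHull ℝ T hy))

open Real

noncomputable def dirVec (θ : ℝ) : Fin 2 → ℝ := ![cos θ, sin θ]

lemma dirVec_periodic : Function.Periodic dirVec (2 * π) := fun θ => by
  simp [dirVec]

lemma dirVec_add_pi (θ : ℝ) : dirVec (θ + π) = -dirVec θ := by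
  ext j; fin_cases j <;> simp [dirVec]

lemma sin_sub_smul_dirVec (θ₁ θ θ₂ : ℝ) :
    sin (θ₂ - θ₁) • dirVec θ = sin (θ₂ - θ) • dirVec θ₁ + sin (θ - θ₁) • dirVec θ₂ := by
  ext j; fin_cases j <;> simp [dirVec, sin_sub] <;> ring

lemma exists_pos_smul_dirVec {a : Fin 2 → ℝ} (ha : a ≠ 0) :
    ∃ r > (0 : ℝ), ∃ θ, a = r • dirVec θ := by
  set z : ℂ := ⟨a 0, a 1⟩
  have hz : z ≠ 0 := fun h => ha (funext fun j => by
    fin_cases j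
    exacts [congrArg Complex.re h, congrArg Complex.im h])
  refine ⟨‖z‖, norm_pos_iff.mpr hz, z.arg, ?_⟩
  ext j; fin_cases j <;> simp [dirVec, Complex.norm_mul_cos_arg, Complex.norm_mul_sin_arg, z]

def sepAngles (K : Set (Fin 2 → ℝ)) (p : Fin 2 → ℝ) : Set ℝ :=
  {θ | ∀ x ∈ K, dirVec θ ⬝ᵥ x < dirVec θ ⬝ᵥ p}

section SepAngles

variable {K : Set (Fin 2 → ℝ)} {p : Fin 2 → ℝ}

lemma isOpen_sepAngles (hK : K.Finite) : IsOpen (sepAngles K p) := by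
  have hcont : ∀ v, Continuous fun θ => dirVec θ ⬝ᵥ v := fun v => by
    simp only [dirVec, dotProduct, Fin.sum_univ_two]
    fun_prop
  simpa only [sepAngles, ofPred_forall] using
    hK.isOpen_biInter fun x _ => isOpen_lt (hcont x) (hcont p)

lemma toIocMod_mem_sepAngles_iff {θ₀ θ : ℝ} :
    toIocMod two_pi_pos θ₀ θ ∈ sepAngles K p ↔ θ ∈ sepAngles K p := by
  rw [← self_sub_toIocDiv_zsmul, sepAngles, mem_ofPred_eq, dirVec_periodic.sub_zsmul_eq]
  rfl

lemma add_two_pi_mem_sepAngles_iff {θ : ℝ} :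
    θ + 2 * π ∈ sepAngles K p ↔ θ ∈ sepAngles K p := by
  simp only [sepAngles, mem_ofPred_eq, dirVec_periodic θ]

lemma add_pi_notMem_sepAngles (hK : K.Nonempty) {θ : ℝ} (hθ : θ ∈ sepAngles K p) :
    θ + π ∉ sepAngles K p := fun hπ => by
  obtain ⟨x, hx⟩ := hK
  have := hπ x hx
  simp only [dirVec_add_pi, neg_dotProduct, neg_lt_neg_iff] at this
  exact this.not_gt (hθ x hx)

lemma mem_sepAngles_of_lt_of_lt {θ₁ θ θ₂ : ℝ} (h₁ : θ₁ ∈ sepAngles K p)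
    (h₂ : θ₂ ∈ sepAngles K p) (hθ₁ : θ₁ < θ) (hθ₂ : θ < θ₂) (hπ : θ₂ - θ₁ < π) :
    θ ∈ sepAngles K p := fun x hx => by
  have hs : ∀ {α}, 0 < α → α < π → 0 < sin α := fun h h' => sin_pos_of_pos_of_lt_pi h h'
  have hcombo : ∀ v, sin (θ₂ - θ₁) * (dirVec θ ⬝ᵥ v) =
      sin (θ₂ - θ) * (dirVec θ₁ ⬝ᵥ v) + sin (θ - θ₁) * (dirVec θ₂ ⬝ᵥ v) := fun v => by
    simpa [add_dotProduct, smul_dotProduct] using congrArg (· ⬝ᵥ v) (sin_sub_smul_dirVec θ₁ θ θ₂)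
  refine lt_of_mul_lt_mul_left ?_ (hs (by linarith) hπ).le
  rw [hcombo, hcombo]
  exact add_lt_add (mul_lt_mul_of_pos_left (h₁ x hx) (hs (by linarith) (by linarith)))
    (mul_lt_mul_of_pos_left (h₂ x hx) (hs (by linarith) (by linarith)))

lemma toIocMod_mem_sepAngles_inter_Ioo {θ₀ θ : ℝ} (h₀ : θ₀ ∉ sepAngles K p)
    (hθ : θ ∈ sepAngles K p) :
    toIocMod two_pi_pos θ₀ θ ∈ sepAngles K p ∩ Ioo θ₀ (θ₀ + 2 * π) := by
  have hmem := (toIocMod_mem_sepAngles_iff (θ₀ := θ₀)).mpr hθ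
  obtain ⟨hlt, hle⟩ := toIocMod_mem_Ioc two_pi_pos θ₀ θ
  refine ⟨hmem, hlt, hle.lt_of_ne fun h => h₀ (add_two_pi_mem_sepAngles_iff.mp (h ▸ hmem))⟩

lemma ordConnected_sepAngles_inter_Ioo (hK : K.Nonempty) {θ₀ : ℝ} (h₀ : θ₀ ∉ sepAngles K p) :
    (sepAngles K p ∩ Ioo θ₀ (θ₀ + 2 * π)).OrdConnected := by
  refine ordConnected_of_Ioo fun θ₁ ⟨h₁, hw₁⟩ θ₂ ⟨h₂, hw₂⟩ _ θ ⟨hθ₁, hθ₂⟩ =>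
    ⟨?_, hw₁.1.trans hθ₁, hθ₂.trans hw₂.2⟩
  rcases lt_trichotomy (θ₂ - θ₁) π with hπ | hπ | hπ
  · exact mem_sepAngles_of_lt_of_lt h₁ h₂ hθ₁ hθ₂ hπ
  · exact absurd (show θ₂ = θ₁ + π by linarith) fun h => add_pi_notMem_sepAngles hK h₁ (h ▸ h₂)
  · -- the arc from `θ₂` to `θ₁ + 2π` is shorter than `π` and passes through `θ₀ + 2π`
    refine absurd (add_two_pi_mem_sepAngles_iff.mp ?_) h₀
    exact mem_sepAngles_of_lt_of_lt h₂ (add_two_pi_mem_sepAngles_iff.mpr h₁) hw₂.2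
      (by linarith [hw₁.1]) (by linarith)

lemma exists_Ioo_eq_sepAngles_inter_Ioo (hK : K.Finite) (hKne : K.Nonempty) {θ₀ θ : ℝ}
    (h₀ : θ₀ ∉ sepAngles K p) (hθ : θ ∈ sepAngles K p) :
    ∃ a b, a < b ∧ sepAngles K p ∩ Ioo θ₀ (θ₀ + 2 * π) = Ioo a b := by
  set W := sepAngles K p ∩ Ioo θ₀ (θ₀ + 2 * π)
  have hW : W = Ioo (sInf W) (sSup W) :=
    ((isOpen_sepAngles hK).inter isOpen_Ioo).eq_Ioo_csInf_csSup
      ⟨⟨_, toIocMod_mem_sepAngles_inter_Ioo h₀ hθ⟩,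
        (ordConnected_sepAngles_inter_Ioo hKne h₀).isPreconnected⟩
      (bddBelow_Ioo.mono inter_subset_right) (bddAbove_Ioo.mono inter_subset_right)
  refine ⟨sInf W, sSup W, nonempty_Ioo.mp ?_, hW⟩
  exact hW ▸ ⟨_, toIocMod_mem_sepAngles_inter_Ioo h₀ hθ⟩

lemma exists_mem_sepAngles_inter (hK : K.Finite) (hKne : K.Nonempty) {q : Fin 2 → ℝ}
    (h : Disjoint (convexHull ℝ K) (convexHull ℝ {p, q})) :
    (sepAngles K p ∩ sepAngles K q).Nonempty := by
  obtain ⟨a, ha⟩ := exists_dotProduct_lt_of_disjoint hK (toFinite _) h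
  have ha0 : a ≠ 0 := by
    rintro rfl
    obtain ⟨x, hx⟩ := hKne
    simpa using ha x hx p (mem_insert _ _)
  obtain ⟨r, hr, θ, rfl⟩ := exists_pos_smul_dirVec ha0
  have hsep : ∀ y ∈ ({p, q} : Set _), θ ∈ sepAngles K y := fun y hy x hx =>
    lt_of_mul_lt_mul_left (by simpa [smul_dotProduct] using ha x hx y hy) hr.le
  exact ⟨θ, hsep p (mem_insert _ _), hsep q (mem_insert_of_mem _ rfl)⟩

lemma sepAngles_nonempty (hK : K.Finite) (hKne : K.Nonempty) (hp : p ∉ convexHull ℝ K) :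
    (sepAngles K p).Nonempty :=
  (exists_mem_sepAngles_inter hK hKne (q := p) (by
    simpa [disjoint_singleton_right] using hp)).mono inter_subset_left

end SepAngles

section Plane

variable {X : Set (Fin 2 → ℤ)}

lemma exists_relax_of_sepAngles (hfin : X.Finite) (hne : X.Nonempty)
    (hX : ∀ z, toR z ∈ convexHull ℝ (toR '' X) ↔ z ∈ X) (Θ : Finset ℝ)
    (hΘ : ∀ o, IsObserver X o → ∃ θ ∈ Θ, θ ∈ sepAngles (toR '' X) (toR o)) :
    ∃ A : Fin Θ.card → Fin 2 → ℝ, ∃ b, Relax X A b := by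
  refine ⟨fun i => dirVec (Θ.equivFin.symm i), exists_relax_of_forall_isObserver hfin hne hX _
    fun o ho => ?_⟩
  obtain ⟨θ, hθ, hθo⟩ := hΘ o ho
  exact ⟨Θ.equivFin ⟨θ, hθ⟩, by simpa using fun x hx => hθo _ (mem_image_of_mem toR hx)⟩

lemma hidingSet_of_pairwiseDisjoint (hfin : X.Finite) (hne : X.Nonempty)
    (hdim : affineSpan ℝ (toR '' X) = ⊤) {θ₀ : ℝ} {D : Finset (Fin 2 → ℤ)}
    (hDX : ∀ x ∈ D, x ∉ X ∧ θ₀ ∉ sepAngles (toR '' X) (toR x))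
    (hD : (D : Set (Fin 2 → ℤ)).PairwiseDisjoint
      fun x => sepAngles (toR '' X) (toR x) ∩ Ioo θ₀ (θ₀ + 2 * π)) :
    HidingSet X D := by
  refine ⟨fun z hz => ⟨(hDX z hz).1, hdim ▸ trivial⟩, fun x hx y hy hxy => ?_⟩
  rw [← not_disjoint_iff_nonempty_inter, disjoint_comm]
  intro hxy'
  obtain ⟨θ, hθx, hθy⟩ := exists_mem_sepAngles_inter (hfin.image toR) (hne.image toR) hxy'
  exact (hD hx hy hxy).ne_of_mem (toIocMod_mem_sepAngles_inter_Ioo (hDX x hx).2 hθx)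
    (toIocMod_mem_sepAngles_inter_Ioo (hDX y hy).2 hθy) rfl

theorem exists_hidingSet_relax_card_le_succ (hfin : X.Finite)
    (hX : ∀ z, toR z ∈ convexHull ℝ (toR '' X) ↔ z ∈ X) (hdim : affineSpan ℝ (toR '' X) = ⊤)
    (hobs : {o | IsObserver X o}.Finite) :
    ∃ n m, (∃ H : Finset (Fin 2 → ℤ), HidingSet X ↑H ∧ H.card = n) ∧
      (∃ A : Fin m → Fin 2 → ℝ, ∃ b, Relax X A b) ∧ m ≤ n + 1 := by
  classical
  have hne : X.Nonempty := by
    have : (affineSpan ℝ (toR '' X) : Set (Fin 2 → ℝ)).Nonempty := by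
      rw [hdim]
      exact ⟨0, trivial⟩
    exact ((affineSpan_nonempty ℝ).mp this).of_image
  set K := toR '' X
  have hsep : ∀ o, IsObserver X o → (sepAngles K (toR o)).Nonempty := fun o ho =>
    sepAngles_nonempty (hfin.image toR) (hne.image toR) fun h => ho.1 ((hX o).mp h)
  set O := hobs.toFinset.filter fun o => 0 ∉ sepAngles K (toR o)
  have hO : ∀ o ∈ O, IsObserver X o ∧ 0 ∉ sepAngles K (toR o) := fun o ho => by
    simpa [O] using ho
  have hwin : ∀ o ∈ O, ∃ a b, a < b ∧ sepAngles K (toR o) ∩ Ioo 0 (0 + 2 * π) = Ioo a b :=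
    fun o ho => exists_Ioo_eq_sepAngles_inter_Ioo (hfin.image toR) (hne.image toR) (hO o ho).2
      (hsep o (hO o ho).1).some_mem
  choose! a b hab hIoo using hwin
  obtain ⟨P, D, hDO, hPO, hD, hPD⟩ := exists_piercing_card_le_pairwiseDisjoint a b O hab
  refine ⟨D.card, (insert 0 P).card, ⟨D, ?_, rfl⟩, exists_relax_of_sepAngles hfin hne hX _ ?_,
    (Finset.card_insert_le _ _).trans (Nat.succ_le_succ hPD)⟩
  · exact hidingSet_of_pairwiseDisjoint hfin hne hdim
      (fun x hx => ⟨(hO x (hDO hx)).1.1, (hO x (hDO hx)).2⟩)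
      (hD.mono_on fun x hx => (hIoo x (hDO hx)).le)
  · intro o ho
    by_cases h₀ : 0 ∈ sepAngles K (toR o)
    · exact ⟨0, Finset.mem_insert_self _ _, h₀⟩
    have hoO : o ∈ O := by simpa [O, h₀] using ho
    obtain ⟨θ, hθP, hθ⟩ := hPO o hoO
    exact ⟨θ, Finset.mem_insert_of_mem hθP, ((hIoo o hoO).symm ▸ hθ).1⟩

end Plane

/-- in the plane, `H(X) ≤ rc(X) ≤ H(X) + 1`, where `H(X)` is the
maximum size of a hiding set and `rc(X)` the minimum number of inequalities of
a relaxation. -/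
theorem rc_plane_hiding_bound (X : Set (Fin 2 → ℤ)) (hfin : X.Finite)
    (hX : ∀ z : Fin 2 → ℤ, toR z ∈ convexHull ℝ (toR '' X) ↔ z ∈ X)
    (hdim : affineSpan ℝ (toR '' X) = ⊤)
    (hobs : {z : Fin 2 → ℤ | z ∉ X ∧ ∀ w : Fin 2 → ℤ,
      toR w ∈ convexHull ℝ (toR '' insert z X) → w ∈ insert z X}.Finite) :
    ∃ h r : ℕ,
      (∃ H : Finset (Fin 2 → ℤ), HidingSet X ↑H ∧ H.card = h) ∧
      (∀ n : ℕ, (∃ H : Finset (Fin 2 → ℤ), HidingSet X ↑H ∧ H.card = n) → n ≤ h) ∧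
      (∃ A : Fin r → Fin 2 → ℝ, ∃ b : Fin r → ℝ, Relax X A b) ∧
      (∀ m : ℕ, (∃ A : Fin m → Fin 2 → ℝ, ∃ b : Fin m → ℝ, Relax X A b) → r ≤ m) ∧
      h ≤ r ∧ r ≤ h + 1 := by
  refine exists_max_min_of_le_of_le_succ ?_ (exists_hidingSet_relax_card_le_succ hfin hX hdim hobs)
  rintro n ⟨H, hH, rfl⟩ m ⟨A, b, hrel⟩
  exact hH.card_le_of_relax hrel
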